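/- Let F = (f_1,…,f_{2n+1}) : U → U' be a C² conformal diffeomorphism between open connected subsets of ℍⁿ with contact factor λ_F, and G = F⁻¹ = (g_1,…,g_{2n+1}). Then for all 1 ≤ k,ℓ ≤ n, on U: (X̃_ℓ g_k) ∘ F = X_{n+k}( f_{n+ℓ} · λ_F^{-1} ) and (X̃_ℓ g_{n+k}) ∘ F = −X_k( f_{n+ℓ} · λ_F^{-1} ). That is, ψ = f_{n+ℓ}·λ_F^{-1} satisfies (X̃_ℓ g_k) ∘ F = X_{n+k}ψ and (X̃_ℓ g_{n+k}) ∘ F = −X_kψ. -/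

import Mathlib

open Set Matrix MeasureTheory

noncomputable section

/-- The underlying space of the `n`-th Heisenberg group: `ℝ^(2n+1)` with coordinates
`(x_1,…,x_n,y_1,…,y_n,t)`. -/
abbrev Heis (n : ℕ) := Fin (2*n+1) → ℝ

/-- Index of the coordinate `x_j`. -/
def xIdx {n : ℕ} (j : Fin n) : Fin (2*n+1) := ⟨j.1, by have := j.2; omega⟩

/-- Index of the coordinate `y_j`. -/
def yIdx {n : ℕ} (j : Fin n) : Fin (2*n+1) := ⟨n + j.1, by have := j.2; omega⟩

/-- Index of the coordinate `t`. -/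
def tIdx {n : ℕ} : Fin (2*n+1) := ⟨2*n, by omega⟩

/-- The index `k ∈ {1,…,2n}` viewed inside `{1,…,2n+1}`. -/
def hIdx {n : ℕ} (k : Fin (2*n)) : Fin (2*n+1) := ⟨k.1, by have := k.2; omega⟩

variable {n : ℕ} {E : Type*} [NormedAddCommGroup E] [NormedSpace ℝ E]

/-- Partial derivative `∂u/∂p_i`. -/
def pd (i : Fin (2*n+1)) (u : Heis n → E) (p : Heis n) : E :=
  fderiv ℝ u p (Pi.single i 1)

/-- The left-invariant vector field `X_j = ∂/∂x_j + 2 y_j ∂/∂t` as a differential operator. -/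
def Xop (j : Fin n) (u : Heis n → E) (p : Heis n) : E :=
  pd (xIdx j) u p + (2 * p (yIdx j)) • pd tIdx u p

/-- The left-invariant vector field `Y_j = ∂/∂y_j - 2 x_j ∂/∂t` as a differential operator. -/
def Yop (j : Fin n) (u : Heis n → E) (p : Heis n) : E :=
  pd (yIdx j) u p - (2 * p (xIdx j)) • pd tIdx u p

/-- The vector field `T = ∂/∂t`. -/
def Tvf (u : Heis n → E) (p : Heis n) : E := pd tIdx u p

/-- `X_k` for `k = 1,…,2n`, where `X_{n+j} = Y_j`. -/
def XYop (k : Fin (2*n)) (u : Heis n → E) (p : Heis n) : E :=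
  if h : (k : ℕ) < n then Xop ⟨k.1, h⟩ u p
  else Yop ⟨k.1 - n, by have := k.2; omega⟩ u p

/-- The right-invariant mirror `X̃_j = X_j - 4 y_j T`. -/
def Xtilde (j : Fin n) (u : Heis n → E) (p : Heis n) : E :=
  Xop j u p - (4 * p (yIdx j)) • Tvf u p

/-- The right-invariant mirror `Ỹ_j = Y_j + 4 x_j T`. -/
def Ytilde (j : Fin n) (u : Heis n → E) (p : Heis n) : E :=
  Yop j u p + (4 * p (xIdx j)) • Tvf u p

/-- The complexified horizontal operator `Z_j = ½(X_j - i Y_j)`. -/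
def Zop (j : Fin n) (u : Heis n → ℂ) (p : Heis n) : ℂ :=
  (1/2 : ℂ) * (Xop j u p - Complex.I * Yop j u p)

/-- The complexified horizontal operator `Z̄_j = ½(X_j + i Y_j)`. -/
def Zbar (j : Fin n) (u : Heis n → ℂ) (p : Heis n) : ℂ :=
  (1/2 : ℂ) * (Xop j u p + Complex.I * Yop j u p)

/-- The operator `L_c = -¼ Σ_j (X_j² + Y_j²) + c T`. -/
def Lop (c : ℝ) (u : Heis n → ℂ) (p : Heis n) : ℂ :=
  -(1/4 : ℂ) * (∑ j : Fin n, (Xop j (Xop j u) p + Yop j (Yop j u) p)) + (c : ℂ) * Tvf u p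

/-- The Heisenberg group law
`(x,y,t)*(x',y',t') = (x+x', y+y', t+t'-2x·y'+2x'·y)`. -/
def hmul (p q : Heis n) : Heis n := fun i =>
  if (i : ℕ) < 2*n then p i + q i
  else p i + q i - 2 * ∑ j : Fin n, p (xIdx j) * q (yIdx j)
    + 2 * ∑ j : Fin n, q (xIdx j) * p (yIdx j)

/-- The point `exp(s X_j) = (s e_j, 0, 0)`. -/
def expX (j : Fin n) (s : ℝ) : Heis n := fun i => if i = xIdx j then s else 0

/-- The point `exp(s Y_j) = (0, s e_j, 0)`. -/
def expY (j : Fin n) (s : ℝ) : Heis n := fun i => if i = yIdx j then s else 0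

/-- The point `exp(s T) = (0, 0, s)`. -/
def expT {n : ℕ} (s : ℝ) : Heis n := fun i => if i = tIdx then s else 0

/-- The standard contact form `α = dt + 2 Σ_k (x_k dy_k - y_k dx_k)` evaluated at the point `p`
on the tangent vector `v`. -/
def alphaForm (p v : Heis n) : ℝ :=
  v tIdx + 2 * ∑ j : Fin n, (p (xIdx j) * v (yIdx j) - p (yIdx j) * v (xIdx j))

/-- `F` is a contact map on `U` with (positive) contact factor `lam`: `F^*α = lam · α`. -/
def IsContact (U : Set (Heis n)) (F : Heis n → Heis n) (lam : Heis n → ℝ) : Prop :=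
  (∀ p ∈ U, 0 < lam p) ∧
  ∀ p ∈ U, ∀ v : Heis n, alphaForm (F p) (fderiv ℝ F p v) = lam p * alphaForm p v

/-- The horizontal differential `D₀F`, the `2n × 2n` matrix with entries `(D₀F)_{m,ℓ} = X_ℓ f_m`. -/
def D0 (F : Heis n → Heis n) (p : Heis n) : Matrix (Fin (2*n)) (Fin (2*n)) ℝ :=
  Matrix.of fun m ℓ => XYop ℓ (fun q => F q (hIdx m)) p

/-- The horizontal Jacobian `J₀F = det D₀F`. -/
def J0 (F : Heis n → Heis n) (p : Heis n) : ℝ := (D0 F p).det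

/-- `F` is conformal on `U` with contact factor `lam`: `F` is contact, `J₀F > 0`, and
`(D₀F)ᵀ (D₀F) = (J₀F)^{1/n} I_{2n}`. -/
def IsConformal (U : Set (Heis n)) (F : Heis n → Heis n) (lam : Heis n → ℝ) : Prop :=
  IsContact U F lam ∧ (∀ p ∈ U, 0 < J0 F p) ∧
  ∀ p ∈ U, (D0 F p)ᵀ * (D0 F p) = (J0 F p ^ (1 / (n : ℝ))) • (1 : Matrix (Fin (2*n)) (Fin (2*n)) ℝ)

/-- The full Jacobian matrix of `F : ℝ^{2n+1} → ℝ^{2n+1}` at `p`. -/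
def fullJac (F : Heis n → Heis n) (p : Heis n) : Matrix (Fin (2*n+1)) (Fin (2*n+1)) ℝ :=
  Matrix.of fun i j => pd j (fun q => F q i) p

end

/-!
Differentiating the contact equation `F^*α = λ α` in a direction `w` and antisymmetrising in
`(v, w)` (the second derivative of `F` is symmetric) gives `F^*dα = dλ ∧ α + λ dα`, i.e.
`4 ω(DF w, DF v) = dλ(w) α(v) - dλ(v) α(w) + 4 λ ω(w, v)`, where `ω` is the horizontal
symplectic form and `dα = 4 ω`. Apply it to `w = DG(F p) X̃_ℓ(F p)`, so that `DF w = X̃_ℓ(F p)`,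
and to a horizontal `V` (`α(V) = 0`). The horizontal part of `X̃_ℓ` is `e_{x_ℓ}`, so
`ω(DF w, DF V) = V f_{n+ℓ}`, and `α(X̃_ℓ) = -4 f_{n+ℓ}` gives `λ α(w) = -4 f_{n+ℓ}`; the identity
becomes `ω(w, V) = V(f_{n+ℓ} λ⁻¹)`. For `V = Y_k` and `V = X_k` the left side is `w_{x_k}` and
`-w_{y_k}`, the `x_k`- and `y_k`-components of `(X̃_ℓ G) ∘ F`.
-/

open ContinuousLinearMap Filter Topology

variable {n : ℕ}

@[simp]
lemma xIdx_ne_tIdx (j : Fin n) : xIdx j ≠ tIdx := by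
  simp [xIdx, tIdx, Fin.ext_iff]; omega

@[simp]
lemma yIdx_ne_tIdx (j : Fin n) : yIdx j ≠ tIdx := by
  simp [yIdx, tIdx, Fin.ext_iff]; omega

@[simp]
lemma xIdx_ne_yIdx (j j' : Fin n) : xIdx j ≠ yIdx j' := by
  simp [xIdx, yIdx, Fin.ext_iff]; omega

@[simp]
lemma yIdx_ne_xIdx (j j' : Fin n) : yIdx j ≠ xIdx j' :=
  (xIdx_ne_yIdx j' j).symm

@[simp]
lemma xIdx_inj {j j' : Fin n} : xIdx j = xIdx j' ↔ j = j' := by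
  simp [xIdx, Fin.ext_iff]

@[simp]
lemma yIdx_inj {j j' : Fin n} : yIdx j = yIdx j' ↔ j = j' := by
  simp [yIdx, Fin.ext_iff]

noncomputable def symplForm (n : ℕ) : Heis n →L[ℝ] Heis n →L[ℝ] ℝ :=
  ∑ j : Fin n, ((mul ℝ ℝ).bilinearComp (proj (xIdx j)) (proj (yIdx j))
    - (mul ℝ ℝ).bilinearComp (proj (yIdx j)) (proj (xIdx j)))

lemma symplForm_apply (c d : Heis n) :
    symplForm n c d = ∑ j : Fin n, (c (xIdx j) * d (yIdx j) - c (yIdx j) * d (xIdx j)) := by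
  simp [symplForm]

lemma symplForm_swap (c d : Heis n) : symplForm n c d = -symplForm n d c := by
  simp only [symplForm_apply, ← Finset.sum_neg_distrib]
  exact Finset.sum_congr rfl fun j _ => by ring

lemma alphaForm_eq_add_symplForm (p v : Heis n) :
    alphaForm p v = v tIdx + 2 * symplForm n p v := by
  rw [alphaForm, symplForm_apply]

noncomputable def XVec (p : Heis n) (j : Fin n) : Heis n :=
  Pi.single (xIdx j) 1 + (2 * p (yIdx j)) • Pi.single tIdx 1

noncomputable def YVec (p : Heis n) (j : Fin n) : Heis n :=
  Pi.single (yIdx j) 1 - (2 * p (xIdx j)) • Pi.single tIdx 1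

noncomputable def XtildeVec (p : Heis n) (j : Fin n) : Heis n :=
  Pi.single (xIdx j) 1 - (2 * p (yIdx j)) • Pi.single tIdx 1

section VectorFields

variable {E : Type*} [NormedAddCommGroup E] [NormedSpace ℝ E] (j : Fin n) (u : Heis n → E)
  (p : Heis n)

lemma Xop_eq_fderiv : Xop j u p = fderiv ℝ u p (XVec p j) := by
  simp [Xop, pd, XVec]

lemma Yop_eq_fderiv : Yop j u p = fderiv ℝ u p (YVec p j) := by
  simp [Yop, pd, YVec]

lemma Xtilde_eq_fderiv : Xtilde j u p = fderiv ℝ u p (XtildeVec p j) := by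
  simp only [Xtilde, Xop, Tvf, pd, XtildeVec, map_sub, map_smul]
  module

end VectorFields

section Evaluations

variable (p w : Heis n) (j : Fin n)

lemma alphaForm_single_tIdx : alphaForm p (Pi.single tIdx 1) = 1 := by
  simp [alphaForm]

lemma alphaForm_XVec : alphaForm p (XVec p j) = 0 := by
  simp [alphaForm, XVec, Pi.single_apply]

lemma alphaForm_YVec : alphaForm p (YVec p j) = 0 := by
  simp [alphaForm, YVec, Pi.single_apply]

lemma alphaForm_XtildeVec : alphaForm p (XtildeVec p j) = -4 * p (yIdx j) := by
  simp [alphaForm, XtildeVec, Pi.single_apply]; ring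

lemma symplForm_XVec : symplForm n w (XVec p j) = -w (yIdx j) := by
  simp [symplForm_apply, XVec, Pi.single_apply]

lemma symplForm_YVec : symplForm n w (YVec p j) = w (xIdx j) := by
  simp [symplForm_apply, YVec, Pi.single_apply]

lemma symplForm_XtildeVec (d : Heis n) : symplForm n (XtildeVec p j) d = d (yIdx j) := by
  simp [symplForm_apply, XtildeVec, Pi.single_apply]

end Evaluations

section Contact

variable {F : Heis n → Heis n} {p : Heis n}

lemma differentiableAt_alphaForm_fderiv (hF : ContDiffAt ℝ 2 F p) (v : Heis n) :
    DifferentiableAt ℝ (fun q => alphaForm (F q) (fderiv ℝ F q v)) p := by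
  have hF1 : DifferentiableAt ℝ F p := hF.differentiableAt two_ne_zero
  have hF2 : DifferentiableAt ℝ (fderiv ℝ F) p :=
    (hF.fderiv_right (m := 1) one_add_one_eq_two.le).differentiableAt one_ne_zero
  simp only [alphaForm_eq_add_symplForm]
  fun_prop

lemma fderiv_alphaForm_fderiv (hF : ContDiffAt ℝ 2 F p) (v w : Heis n) :
    fderiv ℝ (fun q => alphaForm (F q) (fderiv ℝ F q v)) p w
      = alphaForm (F p) (fderiv ℝ (fderiv ℝ F) p w v)
        + 2 * symplForm n (fderiv ℝ F p w) (fderiv ℝ F p v) := by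
  have hF1 : HasFDerivAt F (fderiv ℝ F p) p := (hF.differentiableAt two_ne_zero).hasFDerivAt
  have hF2 := ((hF.fderiv_right (m := 1) one_add_one_eq_two.le).differentiableAt
    one_ne_zero).hasFDerivAt.clm_apply (hasFDerivAt_const v p)
  have H : HasFDerivAt
      (fun q => fderiv ℝ F q v tIdx + 2 * symplForm n (F q) (fderiv ℝ F q v)) _ p :=
    ((proj tIdx : Heis n →L[ℝ] ℝ).hasFDerivAt.comp p hF2).fun_add
      (((symplForm n).hasFDerivAt_of_bilinear hF1 hF2).const_mul 2)
  simp only [alphaForm_eq_add_symplForm]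
  rw [H.fderiv]
  simp only [comp_zero, zero_add, precompR_apply, compL_apply, smul_add, _root_.add_apply,
    ContinuousLinearMap.comp_apply, flip_apply, proj_apply, _root_.smul_apply, smul_eq_mul,
    precompL_apply]
  ring

lemma IsContact.factor_eq {U : Set (Heis n)} {lam : Heis n → ℝ} (hcon : IsContact U F lam)
    (hp : p ∈ U) :
    lam p = alphaForm (F p) (fderiv ℝ F p (Pi.single tIdx 1)) := by
  rw [hcon.2 p hp, alphaForm_single_tIdx, mul_one]

lemma IsContact.differentiableAt_factor {U : Set (Heis n)} {lam : Heis n → ℝ}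
    (hcon : IsContact U F lam) (hU : IsOpen U) (hp : p ∈ U) (hF : ContDiffAt ℝ 2 F p) :
    DifferentiableAt ℝ lam p :=
  (differentiableAt_alphaForm_fderiv hF _).congr_of_eventuallyEq <|
    eventually_of_mem (hU.mem_nhds hp) fun _ hq => hcon.factor_eq hq

variable {Λ : Heis n → ℝ}

lemma alphaForm_fderiv_fderiv_of_contact (hF : ContDiffAt ℝ 2 F p)
    (hΛ : DifferentiableAt ℝ Λ p) {v : Heis n}
    (hc : ∀ᶠ q in 𝓝 p, alphaForm (F q) (fderiv ℝ F q v) = Λ q * alphaForm q v)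
    (w : Heis n) :
    alphaForm (F p) (fderiv ℝ (fderiv ℝ F) p w v)
        + 2 * symplForm n (fderiv ℝ F p w) (fderiv ℝ F p v)
      = fderiv ℝ Λ p w * alphaForm p v + 2 * Λ p * symplForm n w v := by
  have hα : HasFDerivAt (fun q => alphaForm q v) ((2 : ℝ) • (symplForm n).flip v) p := by
    simp only [alphaForm_eq_add_symplForm]
    exact ((symplForm n).flip v).hasFDerivAt.const_mul 2 |>.const_add _
  have h := DFunLike.congr_fun (EventuallyEq.fderiv_eq (𝕜 := ℝ) hc) w
  rw [fderiv_alphaForm_fderiv hF, fderiv_fun_mul hΛ hα.differentiableAt, hα.fderiv] at h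
  simp only [_root_.add_apply, _root_.smul_apply, flip_apply, smul_eq_mul] at h
  linear_combination h

lemma symplForm_fderiv_of_contact (hF : ContDiffAt ℝ 2 F p) (hΛ : DifferentiableAt ℝ Λ p)
    (hc : ∀ᶠ q in 𝓝 p, ∀ v, alphaForm (F q) (fderiv ℝ F q v) = Λ q * alphaForm q v)
    (v w : Heis n) :
    4 * symplForm n (fderiv ℝ F p w) (fderiv ℝ F p v)
      = fderiv ℝ Λ p w * alphaForm p v - fderiv ℝ Λ p v * alphaForm p w
        + 4 * Λ p * symplForm n w v := by
  have hvw := alphaForm_fderiv_fderiv_of_contact hF hΛ (hc.mono fun _ h => h v) w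
  have hwv := alphaForm_fderiv_fderiv_of_contact hF hΛ (hc.mono fun _ h => h w) v
  rw [hF.isSymmSndFDerivAt (by simp [minSmoothness_of_isRCLikeNormedField]) v w,
    symplForm_swap (fderiv ℝ F p v), symplForm_swap v] at hwv
  linear_combination hvw - hwv

lemma symplForm_eq_fderiv_of_contact {w : Heis n} (hF : ContDiffAt ℝ 2 F p)
    (hΛ : DifferentiableAt ℝ Λ p) (hΛ0 : Λ p ≠ 0)
    (hc : ∀ᶠ q in 𝓝 p, ∀ v, alphaForm (F q) (fderiv ℝ F q v) = Λ q * alphaForm q v)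
    {ℓ : Fin n} (hw : fderiv ℝ F p w = XtildeVec (F p) ℓ) {V : Heis n}
    (hV : alphaForm p V = 0) :
    symplForm n w V = fderiv ℝ (fun q => F q (yIdx ℓ) * (Λ q)⁻¹) p V := by
  have hpullback := symplForm_fderiv_of_contact hF hΛ hc V w
  rw [hV, hw, symplForm_XtildeVec] at hpullback
  have hαw : -4 * F p (yIdx ℓ) = Λ p * alphaForm p w := by
    rw [← alphaForm_XtildeVec, ← hw]
    exact hc.self_of_nhds w
  have hFℓ : HasFDerivAt (fun q => F q (yIdx ℓ)) ((proj (yIdx ℓ)).comp (fderiv ℝ F p)) p :=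
    (proj (yIdx ℓ) : Heis n →L[ℝ] ℝ).hasFDerivAt.comp p
      (hF.differentiableAt two_ne_zero).hasFDerivAt
  have hΛinv : HasFDerivAt (fun q => (Λ q)⁻¹) _ p :=
    (hasFDerivAt_inv hΛ0).comp p hΛ.hasFDerivAt
  rw [(hFℓ.fun_mul hΛinv).fderiv]
  simp only [_root_.add_apply, _root_.smul_apply, ContinuousLinearMap.comp_apply,
    toSpanSingleton_apply, smul_eq_mul, mul_neg, proj_apply]
  field_simp
  linear_combination (-Λ p / 4) * hpullback - (fderiv ℝ Λ p V / 4) * hαw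

end Contact

lemma fderiv_apply_fderiv_of_comp_eventuallyEq_id {E E' : Type*} [NormedAddCommGroup E]
    [NormedSpace ℝ E] [NormedAddCommGroup E'] [NormedSpace ℝ E'] {F : E → E'} {G : E' → E}
    {y : E'} (hF : DifferentiableAt ℝ F (G y)) (hG : DifferentiableAt ℝ G y)
    (hFG : F ∘ G =ᶠ[𝓝 y] _root_.id) (u : E') :
    fderiv ℝ F (G y) (fderiv ℝ G y u) = u := by
  have h : fderiv ℝ (F ∘ G) y = ContinuousLinearMap.id ℝ E' := by
    rw [hFG.fderiv_eq, fderiv_id]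
  rw [fderiv_comp y hF hG] at h
  exact DFunLike.congr_fun h u

theorem potential_for_Xtilde_general {n : ℕ}
    (U U' : Set (Heis n)) (hU : IsOpen U) (hU' : IsOpen U')
    (F G : Heis n → Heis n) (lamF : Heis n → ℝ)
    (hF : ContDiffOn ℝ 2 F U) (hG : ContDiffOn ℝ 2 G U')
    (hbij : Set.BijOn F U U') (hinv : Set.InvOn G F U U')
    (hconf : IsConformal U F lamF) :
    ∀ k ℓ : Fin n, ∀ p ∈ U,
      Xtilde ℓ (fun r => G r (xIdx k)) (F p)
        = Yop k (fun q => F q (yIdx ℓ) * (lamF q)⁻¹) p ∧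
      Xtilde ℓ (fun r => G r (yIdx k)) (F p)
        = -Xop k (fun q => F q (yIdx ℓ) * (lamF q)⁻¹) p := by
  intro k ℓ p hp
  have hcon := hconf.1
  have hFp : ContDiffAt ℝ 2 F p := hF.contDiffAt (hU.mem_nhds hp)
  have hFpU' : F p ∈ U' := hbij.mapsTo hp
  have hGd : DifferentiableAt ℝ G (F p) :=
    (hG.contDiffAt (hU'.mem_nhds hFpU')).differentiableAt two_ne_zero
  set w := fderiv ℝ G (F p) (XtildeVec (F p) ℓ)
  have hw : fderiv ℝ F p w = XtildeVec (F p) ℓ := by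
    have hFG : F ∘ G =ᶠ[𝓝 (F p)] _root_.id :=
      eventually_of_mem (hU'.mem_nhds hFpU') hinv.2
    simpa only [hinv.1 hp] using fderiv_apply_fderiv_of_comp_eventuallyEq_id
      ((hinv.1 hp).symm ▸ hFp.differentiableAt two_ne_zero) hGd hFG (XtildeVec (F p) ℓ)
  have hXtilde (i : Fin (2 * n + 1)) : Xtilde ℓ (fun r => G r i) (F p) = w i := by
    rw [Xtilde_eq_fderiv, fderiv_apply hGd]; rfl
  have hpotential {V : Heis n} (hV : alphaForm p V = 0) :=
    symplForm_eq_fderiv_of_contact hFp (hcon.differentiableAt_factor hU hp hFp)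
      (hcon.1 p hp).ne' (eventually_of_mem (hU.mem_nhds hp) hcon.2) hw hV
  rw [hXtilde, hXtilde, Yop_eq_fderiv, Xop_eq_fderiv, ← hpotential (alphaForm_YVec p k),
    ← hpotential (alphaForm_XVec p k), symplForm_YVec, symplForm_XVec, neg_neg]
  exact ⟨rfl, rfl⟩

/-- Let `F : U → U'` be a `C²` conformal diffeomorphism with contact factor
`λ_F` and inverse `G`. Then for all `1 ≤ k,ℓ ≤ n`, on `U`:
`(X̃_ℓ g_k) ∘ F = X_{n+k}(f_{n+ℓ} · λ_F⁻¹)` and `(X̃_ℓ g_{n+k}) ∘ F = -X_k(f_{n+ℓ} · λ_F⁻¹)`;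
that is, `ψ = f_{n+ℓ} · λ_F⁻¹` is a potential for `X̃_ℓ`. -/
theorem potential_for_Xtilde {n : ℕ}
    (U U' : Set (Heis n)) (hU : IsOpen U) (hU' : IsOpen U')
    (hUconn : IsConnected U) (hU'conn : IsConnected U')
    (F G : Heis n → Heis n) (lamF : Heis n → ℝ)
    (hF : ContDiffOn ℝ 2 F U) (hG : ContDiffOn ℝ 2 G U')
    (hbij : Set.BijOn F U U') (hinv : Set.InvOn G F U U')
    (hconf : IsConformal U F lamF) :
    ∀ k ℓ : Fin n, ∀ p ∈ U,
      Xtilde ℓ (fun r => G r (xIdx k)) (F p)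
        = Yop k (fun q => F q (yIdx ℓ) * (lamF q)⁻¹) p ∧
      Xtilde ℓ (fun r => G r (yIdx k)) (F p)
        = -Xop k (fun q => F q (yIdx ℓ) * (lamF q)⁻¹) p :=
  potential_for_Xtilde_general U U' hU hU' F G lamF hF hG hbij hinv hconf
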